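/- Let R₊ be the orthogonal projection of L²(𝕋) onto the closed linear span of {eₙ : n ≥ 0}, where eₙ(e^{iθ}) = e^{inθ}. Let f ∈ L^∞(𝕋) satisfy f̂(n) = 0 for all n > 0 (equivalently, g = conj(f) is the boundary value of a function holomorphic in the unit disc), let g = conj(f), and define W = M_g∘[M_f, R₊] − M_f∘[M_g, R₊] on L²(𝕋). Then for all m, n ∈ ℕ: ⟨W eₙ, eₘ⟩ = ∑_{j=0}^∞ conj(f̂(−(j+m+1)))·f̂(−(j+n+1)); that is, R₊WR₊ = Γ_f*Γ_f. -/

import Mathlib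

/-!
Because `f̂` vanishes at positive frequencies, `M_g` maps `H²` into itself, so the second
term of `W` vanishes on `eₙ` and `W eₙ = M_g (1 - R₊) M_f eₙ`. Since `M_g = M_f*` and `1 - R₊`
is an orthogonal projection, `⟪eₘ, W eₙ⟫ = ⟪(1 - R₊) M_f eₘ, (1 - R₊) M_f eₙ⟫`. The Fourier
coefficients of `(1 - R₊) M_f eₚ` are `f̂(k - p)` for `k < 0` and `0` otherwise, and
Parseval's identity turns the inner product into the stated sum over `k = -(j + 1)`.
-/

open MeasureTheory AddCircle
open scoped Real ENNReal InnerProductSpace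

instance : Fact (0 < 2 * π) := ⟨by positivity⟩

/-- The Hardy subspace `H²` of `L²(𝕋)`: the closed linear span of `{eₙ : n ≥ 0}`. -/
noncomputable def hardySubmodule :
    Submodule ℂ (Lp ℂ 2 (@haarAddCircle (2 * π) _)) :=
  (Submodule.span ℂ (Set.range fun n : ℕ => fourierLp 2 (n : ℤ))).topologicalClosure

instance : CompleteSpace hardySubmodule :=
  Submodule.topologicalClosure.completeSpace _

/-- The Riesz projection `R₊`: the orthogonal projection of `L²(𝕋)` onto the Hardy space. -/
noncomputable def rieszPlus :
    Lp ℂ 2 (@haarAddCircle (2 * π) _) →L[ℂ] Lp ℂ 2 (@haarAddCircle (2 * π) _) :=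
  hardySubmodule.subtypeL ∘L hardySubmodule.orthogonalProjectionOnto

open scoped ComplexConjugate

local notation "L²[" T "]" => Lp ℂ 2 (@haarAddCircle T _)

section FourierCoefficients

variable {T : ℝ} [Fact (0 < T)]

theorem inner_fourierLp_eq_fourierCoeff (u : L²[T]) (k : ℤ) :
    ⟪(fourierLp 2 k : L²[T]), u⟫_ℂ = fourierCoeff u k := by
  rw [← fourierBasis_repr, HilbertBasis.repr_apply_apply, coe_fourierBasis]

theorem inner_eq_tsum_fourierCoeff (u v : L²[T]) :
    ⟪u, v⟫_ℂ = ∑' k : ℤ, conj (fourierCoeff u k) * fourierCoeff v k := by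
  rw [← fourierBasis.repr.inner_map_map u v, lp.inner_eq_tsum]
  congr 1 with k
  rw [fourierBasis_repr, fourierBasis_repr, RCLike.inner_apply, mul_comm]

def IsMultiplicationOperator (h : AddCircle T → ℂ) (M : L²[T] →L[ℂ] L²[T]) : Prop :=
  ∀ u : L²[T], (M u : AddCircle T → ℂ) =ᵐ[haarAddCircle] fun x => h x * u x

namespace IsMultiplicationOperator

variable {h : AddCircle T → ℂ} {M M' : L²[T] →L[ℂ] L²[T]}

theorem inner_fourierLp (hM : IsMultiplicationOperator h M) (k n : ℤ) :
    ⟪(fourierLp 2 k : L²[T]), M (fourierLp 2 n)⟫_ℂ = fourierCoeff h (k - n) := by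
  rw [L2.inner_def, fourierCoeff]
  refine integral_congr_ae ?_
  filter_upwards [hM (fourierLp 2 n), coeFn_fourierLp 2 n, coeFn_fourierLp 2 k]
    with x hMx hn hk
  rw [RCLike.inner_apply, hMx, hn, hk, smul_eq_mul, show -(k - n) = n + -k by ring,
    fourier_add, fourier_neg]
  ring

theorem inner_conj (hM : IsMultiplicationOperator h M)
    (hM' : IsMultiplicationOperator (fun x => conj (h x)) M') (u w : L²[T]) :
    ⟪u, M' w⟫_ℂ = ⟪M u, w⟫_ℂ := by
  rw [L2.inner_def, L2.inner_def]
  refine integral_congr_ae ?_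
  filter_upwards [hM' w, hM u] with x hM'x hMx
  rw [RCLike.inner_apply, RCLike.inner_apply, hM'x, hMx, map_mul]
  ring

theorem inner_fourierLp_of_conj (hM : IsMultiplicationOperator h M)
    (hM' : IsMultiplicationOperator (fun x => conj (h x)) M') (k n : ℤ) :
    ⟪(fourierLp 2 k : L²[T]), M' (fourierLp 2 n)⟫_ℂ = conj (fourierCoeff h (n - k)) := by
  rw [hM.inner_conj hM', ← inner_conj_symm, hM.inner_fourierLp]

end IsMultiplicationOperator

end FourierCoefficients

theorem Submodule.inner_sub_starProjection_right {𝕜 E : Type*} [RCLike 𝕜]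
    [NormedAddCommGroup E] [InnerProductSpace 𝕜 E] (K : Submodule 𝕜 E)
    [K.HasOrthogonalProjection] (x y : E) :
    ⟪x, y - K.starProjection y⟫_𝕜 = ⟪x - K.starProjection x, y - K.starProjection y⟫_𝕜 := by
  rw [inner_sub_left, inner_eq_zero_symm.mp
    (K.starProjection_inner_eq_zero y _ (K.starProjection_apply_mem x)), sub_zero]

theorem tsum_int_eq_tsum_nat_neg_succ {α : Type*} [AddCommMonoid α] [TopologicalSpace α]
    {φ : ℤ → α} (hφ : ∀ k, 0 ≤ k → φ k = 0) :
    ∑' k : ℤ, φ k = ∑' j : ℕ, φ (-(j + 1)) := by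
  refine (Function.Injective.tsum_eq (fun a b hab => by omega)
    fun k hk => ⟨(-k - 1).toNat, ?_⟩).symm
  have : k < 0 := by
    by_contra! hk0
    exact hk (hφ k hk0)
  omega

section Hardy

theorem fourierLp_mem_hardySubmodule {k : ℤ} (hk : 0 ≤ k) :
    (fourierLp 2 k : L²[2 * π]) ∈ hardySubmodule := by
  lift k to ℕ using hk
  exact Submodule.le_topologicalClosure _ (Submodule.subset_span ⟨k, rfl⟩)

theorem inner_fourierLp_eq_zero_of_mem_hardySubmodule {k : ℤ} (hk : k < 0) {u : L²[2 * π]}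
    (hu : u ∈ hardySubmodule) : ⟪(fourierLp 2 k : L²[2 * π]), u⟫_ℂ = 0 := by
  have hle : hardySubmodule ≤ (ℂ ∙ (fourierLp 2 k : L²[2 * π]))ᗮ := by
    refine Submodule.topologicalClosure_minimal _ ?_ (Submodule.isClosed_orthogonal _)
    rw [Submodule.span_le]
    rintro _ ⟨n, rfl⟩
    rw [SetLike.mem_coe, Submodule.mem_orthogonal_singleton_iff_inner_right, ← coe_fourierBasis]
    exact fourierBasis.orthonormal.2 (by omega)
  exact Submodule.mem_orthogonal_singleton_iff_inner_right.mp (hle hu)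

theorem mem_hardySubmodule_iff {u : L²[2 * π]} :
    u ∈ hardySubmodule ↔ ∀ k < 0, fourierCoeff u k = 0 := by
  refine ⟨fun hu k hk => ?_, fun hu => ?_⟩
  · rw [← inner_fourierLp_eq_fourierCoeff, inner_fourierLp_eq_zero_of_mem_hardySubmodule hk hu]
  · have hpartial : ∀ s : Finset ℤ,
        ∑ k ∈ s, fourierCoeff u k • (fourierLp 2 k : L²[2 * π]) ∈ hardySubmodule := by
      refine fun s => Submodule.sum_mem _ fun k _ => ?_
      rcases lt_or_ge k 0 with hk | hk
      · simp [hu k hk]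
      · exact Submodule.smul_mem _ _ (fourierLp_mem_hardySubmodule hk)
    have hclosed : IsClosed (hardySubmodule : Set L²[2 * π]) :=
      Submodule.isClosed_topologicalClosure _
    exact hclosed.mem_of_tendsto
      (hasSum_fourier_series_L2 u) (Filter.Eventually.of_forall hpartial)

theorem rieszPlus_eq_starProjection : rieszPlus = hardySubmodule.starProjection := rfl

theorem fourierCoeff_sub_rieszPlus (v : L²[2 * π]) (k : ℤ) :
    fourierCoeff ⇑(v - rieszPlus v) k = if k < 0 then fourierCoeff v k else 0 := by
  rw [← inner_fourierLp_eq_fourierCoeff, inner_sub_right, rieszPlus_eq_starProjection]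
  split_ifs with hk
  · rw [inner_fourierLp_eq_zero_of_mem_hardySubmodule hk (Submodule.starProjection_apply_mem _ _),
      sub_zero, inner_fourierLp_eq_fourierCoeff]
  · rw [← Submodule.inner_starProjection_left_eq_right, Submodule.starProjection_eq_self_iff.mpr
      (fourierLp_mem_hardySubmodule (not_lt.mp hk)), sub_self]

end Hardy

theorem stmt_17_general (f g : AddCircle (2 * π) → ℂ)
    (hcoeff : ∀ n : ℤ, 0 < n → fourierCoeff f n = 0)
    (hfg : g = fun x => starRingEnd ℂ (f x))
    (Mf Mg : Lp ℂ 2 (@haarAddCircle (2 * π) _) →L[ℂ] Lp ℂ 2 (@haarAddCircle (2 * π) _))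
    (hMf : ∀ u : Lp ℂ 2 (@haarAddCircle (2 * π) _),
      (Mf u : AddCircle (2 * π) → ℂ) =ᵐ[@haarAddCircle (2 * π) _] fun x => f x * u x)
    (hMg : ∀ u : Lp ℂ 2 (@haarAddCircle (2 * π) _),
      (Mg u : AddCircle (2 * π) → ℂ) =ᵐ[@haarAddCircle (2 * π) _] fun x => g x * u x)
    (W : Lp ℂ 2 (@haarAddCircle (2 * π) _) →L[ℂ] Lp ℂ 2 (@haarAddCircle (2 * π) _))
    (hW : W = Mg ∘L (Mf ∘L rieszPlus - rieszPlus ∘L Mf)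
            - Mf ∘L (Mg ∘L rieszPlus - rieszPlus ∘L Mg)) :
    ∀ m n : ℕ,
      ⟪(fourierLp 2 (m : ℤ) : Lp ℂ 2 (@haarAddCircle (2 * π) _)),
          W (fourierLp 2 (n : ℤ))⟫_ℂ
        = ∑' j : ℕ,
            starRingEnd ℂ (fourierCoeff f (-(j + m + 1 : ℤ)))
              * fourierCoeff f (-(j + n + 1 : ℤ)) := by
  subst hfg
  replace hMf : IsMultiplicationOperator f Mf := hMf
  replace hMg : IsMultiplicationOperator (fun x => conj (f x)) Mg := hMg
  intro m n
  set e : ℕ → L²[2 * π] := fun p => fourierLp 2 (p : ℤ)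
  have hMg_mem : Mg (e n) ∈ hardySubmodule := mem_hardySubmodule_iff.mpr fun k hk => by
    rw [← inner_fourierLp_eq_fourierCoeff, hMf.inner_fourierLp_of_conj hMg, hcoeff _ (by omega),
      map_zero]
  have hWe : W (e n) = Mg (Mf (e n) - rieszPlus (Mf (e n))) := by
    have hRe : rieszPlus (e n) = e n :=
      Submodule.starProjection_eq_self_iff.mpr (fourierLp_mem_hardySubmodule (Int.natCast_nonneg n))
    have hRMg : rieszPlus (Mg (e n)) = Mg (e n) :=
      Submodule.starProjection_eq_self_iff.mpr hMg_mem
    simp only [hW, sub_apply, ContinuousLinearMap.comp_apply, hRe, hRMg, sub_self, map_zero,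
      sub_zero]
  have hcoeff_sub (p : ℕ) (k : ℤ) : fourierCoeff ⇑(Mf (e p) - rieszPlus (Mf (e p))) k =
      if k < 0 then fourierCoeff f (k - p) else 0 := by
    rw [fourierCoeff_sub_rieszPlus, ← inner_fourierLp_eq_fourierCoeff, hMf.inner_fourierLp]
  calc ⟪e m, W (e n)⟫_ℂ = ⟪Mf (e m), Mf (e n) - rieszPlus (Mf (e n))⟫_ℂ := by
        rw [hWe, hMf.inner_conj hMg]
    _ = ⟪Mf (e m) - rieszPlus (Mf (e m)), Mf (e n) - rieszPlus (Mf (e n))⟫_ℂ :=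
        hardySubmodule.inner_sub_starProjection_right _ _
    _ = _ := by
      rw [inner_eq_tsum_fourierCoeff, tsum_int_eq_tsum_nat_neg_succ fun k hk => by
        rw [hcoeff_sub, if_neg (not_lt.mpr hk), map_zero, zero_mul]]
      refine tsum_congr fun j => ?_
      rw [hcoeff_sub, hcoeff_sub, if_pos (by omega), if_pos (by omega)]
      ring_nf

/-- If `f ∈ L^∞(𝕋)` has `f̂(n) = 0` for all `n > 0` (so `g = conj f` is holomorphic in the
disc), then the compression of `W = M_g[M_f,R₊] − M_f[M_g,R₊]` to `H²` has matrix entries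
`⟨W eₙ, eₘ⟩ = ∑_j conj f̂(−(j+m+1))·f̂(−(j+n+1))`; that is, `R₊WR₊ = Γ_f*Γ_f`. -/
theorem stmt_17 (f g : AddCircle (2 * π) → ℂ)
    (hf : MemLp f ⊤ (@haarAddCircle (2 * π) _))
    (hcoeff : ∀ n : ℤ, 0 < n → fourierCoeff f n = 0)
    (hfg : g = fun x => starRingEnd ℂ (f x))
    (Mf Mg : Lp ℂ 2 (@haarAddCircle (2 * π) _) →L[ℂ] Lp ℂ 2 (@haarAddCircle (2 * π) _))
    (hMf : ∀ u : Lp ℂ 2 (@haarAddCircle (2 * π) _),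
      (Mf u : AddCircle (2 * π) → ℂ) =ᵐ[@haarAddCircle (2 * π) _] fun x => f x * u x)
    (hMg : ∀ u : Lp ℂ 2 (@haarAddCircle (2 * π) _),
      (Mg u : AddCircle (2 * π) → ℂ) =ᵐ[@haarAddCircle (2 * π) _] fun x => g x * u x)
    (W : Lp ℂ 2 (@haarAddCircle (2 * π) _) →L[ℂ] Lp ℂ 2 (@haarAddCircle (2 * π) _))
    (hW : W = Mg ∘L (Mf ∘L rieszPlus - rieszPlus ∘L Mf)
            - Mf ∘L (Mg ∘L rieszPlus - rieszPlus ∘L Mg)) :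
    ∀ m n : ℕ,
      ⟪(fourierLp 2 (m : ℤ) : Lp ℂ 2 (@haarAddCircle (2 * π) _)),
          W (fourierLp 2 (n : ℤ))⟫_ℂ
        = ∑' j : ℕ,
            starRingEnd ℂ (fourierCoeff f (-(j + m + 1 : ℤ)))
              * fourierCoeff f (-(j + n + 1 : ℤ)) :=
  stmt_17_general f g hcoeff hfg Mf Mg hMf hMg W hW
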